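/- arXiv:2411.19272 — 3 statements merged into one kernel-verified Lean document; each statement's English description precedes it below -/
import Mathlib

section
/- Let g, h: X → ℝ ∪ {+∞} be proper generalized polyhedral convex functions and C ⊆ X a nonempty generalized polyhedral convex set with C ⊆ dom g and C ⊆ int(dom h). Then every connected component of the local solution set of the problem: minimize f(x) = g(x) − h(x) subject to x ∈ C, is a union of finitely many semi-closed generalized polyhedral convex sets, and f is constant on each connected component. -/
open Pointwise Topology

/-- A generalized polyhedral convex set: the intersection of a closed affine subspace
with finitely many closed half-spaces given by continuous linear functionals. -/
def IsGPCS (X : Type*) [AddCommGroup X] [Module ℝ X] [TopologicalSpace X] (S : Set X) : Prop :=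
  ∃ (L : AffineSubspace ℝ X) (p : ℕ) (a : Fin p → (X →L[ℝ] ℝ)) (c : Fin p → ℝ),
    IsClosed (L : Set X) ∧ S = {x : X | x ∈ L ∧ ∀ k, a k x ≤ c k}

/-- The epigraph of an extended-real-valued function. -/
def epigraph {X : Type*} (ψ : X → EReal) : Set (X × ℝ) := {p | ψ p.1 ≤ (p.2 : EReal)}

/-- A generalized polyhedral convex function: one whose epigraph is a generalized
polyhedral convex set in `X × ℝ`. -/
def IsGPCF (X : Type*) [AddCommGroup X] [Module ℝ X] [TopologicalSpace X] (ψ : X → EReal) : Prop :=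
  IsGPCS (X × ℝ) (epigraph ψ)

/-- A proper function: not identically `+∞` and never `-∞`. -/
def ProperFn {X : Type*} (ψ : X → EReal) : Prop := (∃ x, ψ x ≠ ⊤) ∧ ∀ x, ψ x ≠ ⊥

/-- Convexity of an extended-real-valued function, via convexity of the epigraph. -/
def ConvexFn {X : Type*} [AddCommGroup X] [Module ℝ X] (ψ : X → EReal) : Prop :=
  Convex ℝ (epigraph ψ)

/-- The effective domain of an extended-real-valued function. -/
def domFn {X : Type*} (ψ : X → EReal) : Set X := {x | ψ x ≠ ⊤}

open Classical in
/-- The indicator function of a set: `0` on the set, `+∞` outside. -/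
noncomputable def indFn {X : Type*} (C : Set X) : X → EReal := fun x => if x ∈ C then 0 else ⊤

open Classical in
/-- The DC objective `g - h` with the convention `(+∞) - (+∞) = +∞`. -/
noncomputable def dcObj {X : Type*} (g h : X → EReal) : X → EReal :=
  fun x => if g x = ⊤ ∧ h x = ⊤ then ⊤ else g x - h x

/-- The subdifferential (in the sense of convex analysis) of `φ` at `x₀`. -/
def SubdiffAt {X : Type*} [AddCommGroup X] [Module ℝ X] [TopologicalSpace X]
    (φ : X → EReal) (x₀ : X) : Set (X →L[ℝ] ℝ) :=
  {p | ∀ x : X, ((p x - p x₀ : ℝ) : EReal) ≤ φ x - φ x₀}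

/-- The subdifferential of a function defined on the dual space, with values in `X`
(the dual of `X*` in the weak* topology). -/
def SubdiffStarAt {X : Type*} [AddCommGroup X] [Module ℝ X] [TopologicalSpace X]
    (Φ : (X →L[ℝ] ℝ) → EReal) (p₀ : X →L[ℝ] ℝ) : Set X :=
  {x | ∀ p : X →L[ℝ] ℝ, ((p x - p₀ x : ℝ) : EReal) ≤ Φ p - Φ p₀}

/-- The normal cone to a convex set `C` at `x₀ ∈ C`. -/
def normalConeAt {X : Type*} [AddCommGroup X] [Module ℝ X] [TopologicalSpace X]
    (C : Set X) (x₀ : X) : Set (X →L[ℝ] ℝ) :=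
  {p | ∀ x ∈ C, p x - p x₀ ≤ 0}

/-- The Fenchel conjugate function. -/
noncomputable def conjFn {X : Type*} [AddCommGroup X] [Module ℝ X] [TopologicalSpace X]
    (φ : X → EReal) : (X →L[ℝ] ℝ) → EReal :=
  fun p => ⨆ x : X, (((p x : ℝ) : EReal) - φ x)

/-- `x₀` is a local solution of: minimize `g - h` over `C`. -/
def IsLocalSolution {X : Type*} [TopologicalSpace X] (g h : X → EReal) (C : Set X)
    (x₀ : X) : Prop :=
  x₀ ∈ C ∧ ∃ U ∈ nhds x₀, ∀ x ∈ C ∩ U, dcObj g h x₀ ≤ dcObj g h x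

/-- `x₀` is a (global) solution of: minimize `g - h` over `C`. -/
def IsSolution {X : Type*} (g h : X → EReal) (C : Set X) (x₀ : X) : Prop :=
  x₀ ∈ C ∧ ∀ x ∈ C, dcObj g h x₀ ≤ dcObj g h x

/-- `S` is open in the relative topology of `C`. -/
def RelOpenIn {X : Type*} [TopologicalSpace X] (C S : Set X) : Prop :=
  ∃ V : Set X, IsOpen V ∧ S = C ∩ V

/-- A semi-closed generalized polyhedral convex subset of `C`: the intersection of a
generalized polyhedral convex subset of `C` with a convex subset of `C` that is open
in the relative topology of `C`. -/
def IsSemiClosedGPCSIn {X : Type*} [AddCommGroup X] [Module ℝ X] [TopologicalSpace X]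
    (C S : Set X) : Prop :=
  ∃ P Q : Set X, IsGPCS X P ∧ P ⊆ C ∧ Convex ℝ Q ∧ Q ⊆ C ∧ RelOpenIn C Q ∧ S = P ∩ Q


/-! On `C`, `g = max_i a_i` and `h = max_j b_j` for finitely many continuous affine functions
`a_i`, `b_j`. A point `x ∈ C` is a local solution iff it minimizes the convex function `g - b_j`
over `C` for every index `j` active for `h` at `x`: local minima of convex functions are global,
and near `x` only indices active at `x` can be active. Grouping the local solutions by their
active set `J` cuts the solution set into finitely many pieces. Given a point `z` of a piece and
some `j₀ ∈ J`, the piece is cut out of `C` by the polyhedral conditions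
`g ≤ b_j + (g - b_j) z` and `b_j = b_{j₀}` for `j ∈ J` together with the open conditions
`b_j < b_{j₀}` for `j ∉ J`; so it is semi-closed and convex, and `g - h` is constant on it.
A connected component is the union of the pieces it meets, and on it the continuous function
`g - h` takes finitely many values, hence only one. -/

section GPCS

variable {X : Type*} [AddCommGroup X] [Module ℝ X] [TopologicalSpace X]

lemma IsGPCS.of_finite {ι : Type*} [Finite ι] {L : AffineSubspace ℝ X}
    (hL : IsClosed (L : Set X)) (a : ι → X →L[ℝ] ℝ) (c : ι → ℝ) :
    IsGPCS X {x | x ∈ L ∧ ∀ k, a k x ≤ c k} := by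
  obtain ⟨n, ⟨e⟩⟩ := Finite.exists_equiv_fin ι
  refine ⟨L, n, a ∘ e.symm, c ∘ e.symm, hL, ?_⟩
  ext x
  simp [e.forall_congr_left]

lemma isGPCS_univ : IsGPCS X Set.univ := by
  simpa using IsGPCS.of_finite (L := ⊤) (by simp) (Empty.elim : Empty → X →L[ℝ] ℝ) Empty.elim

lemma isGPCS_empty : IsGPCS X ∅ :=
  ⟨⊥, 0, Fin.elim0, Fin.elim0, by simp, by ext; simp⟩

lemma isGPCS_setOf_eq (e : X →L[ℝ] ℝ) (d : ℝ) : IsGPCS X {x | e x = d} := by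
  convert IsGPCS.of_finite (L := ⊤) (by simp) ![e, -e] ![d, -d] using 1
  ext x
  simp [Fin.forall_fin_two, le_antisymm_iff]

lemma IsGPCS.inter {S T : Set X} (hS : IsGPCS X S) (hT : IsGPCS X T) : IsGPCS X (S ∩ T) := by
  obtain ⟨L₁, p₁, a₁, c₁, hL₁, rfl⟩ := hS
  obtain ⟨L₂, p₂, a₂, c₂, hL₂, rfl⟩ := hT
  convert IsGPCS.of_finite (L := L₁ ⊓ L₂) (hL₁.inter hL₂)
    (Sum.elim a₁ a₂) (Sum.elim c₁ c₂) using 1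
  ext x
  simp only [Set.mem_inter_iff, Set.mem_ofPred_eq, Sum.forall, Sum.elim_inl, Sum.elim_inr,
    AffineSubspace.mem_inf_iff]
  tauto

lemma IsGPCS.biInter {ι : Type*} {s : Finset ι} {S : ι → Set X} (hS : ∀ i ∈ s, IsGPCS X (S i)) :
    IsGPCS X (⋂ i ∈ s, S i) := by
  classical
  induction s using Finset.induction with
  | empty => simpa using isGPCS_univ
  | insert a s _ ih =>
    rw [Finset.set_biInter_insert]
    exact (hS a (s.mem_insert_self a)).inter (ih fun i hi => hS i (Finset.mem_insert_of_mem hi))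

lemma IsGPCS.convex {S : Set X} (hS : IsGPCS X S) : Convex ℝ S := by
  obtain ⟨L, p, a, c, -, rfl⟩ := hS
  have hS : {x | x ∈ L ∧ ∀ k, a k x ≤ c k} = (L : Set X) ∩ ⋂ k, {x | a k x ≤ c k} := by
    ext x; simp
  rw [hS]
  exact L.convex.inter (convex_iInter fun k => convex_halfSpace_le (a k).isLinear (c k))

lemma IsGPCS.preimage_add_const {Y : Type*} [AddCommGroup Y] [Module ℝ Y] [TopologicalSpace Y]
    [ContinuousAdd Y] {S : Set Y} (hS : IsGPCS Y S) (T : X →L[ℝ] Y) (y₀ : Y) :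
    IsGPCS X ((fun x => T x + y₀) ⁻¹' S) := by
  obtain ⟨L, p, a, c, hL, rfl⟩ := hS
  let f : X →ᵃ[ℝ] Y := T.toLinearMap.toAffineMap + AffineMap.const ℝ X y₀
  have hf : ⇑f = fun x => T x + y₀ := rfl
  convert IsGPCS.of_finite (L := L.comap f)
    (by rw [AffineSubspace.coe_comap, hf]; exact hL.preimage (T.continuous.add continuous_const))
    (fun k => (a k).comp T) (fun k => c k - a k y₀) using 1
  ext x
  simp [hf, le_sub_iff_add_le]

lemma IsGPCF.isGPCS_setOf_le_affine [ContinuousAdd X] {ψ : X → EReal} (hψ : IsGPCF X ψ)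
    (w : X →L[ℝ] ℝ) (κ : ℝ) : IsGPCS X {x | ψ x ≤ ((w x + κ : ℝ) : EReal)} := by
  convert hψ.preimage_add_const ((ContinuousLinearMap.id ℝ X).prod w) (0, κ) using 1
  ext x
  simp [epigraph]

end GPCS

section MaxAffine

variable {X : Type*} [AddCommGroup X] [Module ℝ X] [TopologicalSpace X]
  {ι : Type*} [Fintype ι] [Nonempty ι] (v : ι → X →L[ℝ] ℝ) (β : ι → ℝ)

noncomputable def maxAffine : X → ℝ :=
  Finset.univ.sup' Finset.univ_nonempty fun i x => v i x + β i

noncomputable def activeSet (x : X) : Finset ι :=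
  Finset.univ.filter fun i => v i x + β i = maxAffine v β x

variable {v β}

@[simp]
lemma mem_activeSet {x : X} {i : ι} : i ∈ activeSet v β x ↔ v i x + β i = maxAffine v β x := by
  simp [activeSet]

lemma le_maxAffine (x : X) (i : ι) : v i x + β i ≤ maxAffine v β x := by
  rw [maxAffine, Finset.sup'_apply]
  exact Finset.le_sup' (fun i => v i x + β i) (Finset.mem_univ i)

lemma activeSet_nonempty (x : X) : (activeSet v β x).Nonempty := by
  obtain ⟨i, -, hi⟩ := Finset.exists_mem_eq_sup' Finset.univ_nonempty fun i => v i x + β i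
  exact ⟨i, mem_activeSet.2 (by rw [maxAffine, Finset.sup'_apply, hi])⟩

lemma continuous_maxAffine : Continuous (maxAffine v β) :=
  Continuous.finset_sup' _ fun i _ => (v i).continuous.add continuous_const

lemma convexOn_maxAffine : ConvexOn ℝ Set.univ (maxAffine v β) :=
  Finset.sup'_induction _ _ (fun _ hf _ hg => hf.sup hg) fun i _ =>
    ((v i).toLinearMap.convexOn convex_univ).add_const (β i)

lemma eventually_activeSet_subset (x : X) : ∀ᶠ y in 𝓝 x, activeSet v β y ⊆ activeSet v β x := by
  have hlt : ∀ᶠ y in 𝓝 x, ∀ j, j ∉ activeSet v β x → v j y + β j < maxAffine v β y := by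
    refine Filter.eventually_all.2 fun j => ?_
    by_cases hj : j ∈ activeSet v β x
    · exact Filter.Eventually.of_forall fun _ h => absurd hj h
    · have hjx := lt_of_le_of_ne (le_maxAffine x j) (mt mem_activeSet.2 hj)
      filter_upwards [((v j).continuous.add continuous_const).continuousAt.eventually_lt
        continuous_maxAffine.continuousAt hjx] with y hy using fun _ => hy
  filter_upwards [hlt] with y hy j hjy
  by_contra hjx
  exact (hy j hjx).ne (mem_activeSet.1 hjy)

lemma activeSet_eq_iff {x : X} {J : Finset ι} {i₀ : ι} (hi₀ : i₀ ∈ J) :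
    activeSet v β x = J ↔
      (∀ i ∈ J, v i x + β i = v i₀ x + β i₀) ∧ ∀ j ∉ J, v j x + β j < v i₀ x + β i₀ := by
  constructor
  · rintro rfl
    have h₀ := mem_activeSet.1 hi₀
    exact ⟨fun i hi => (mem_activeSet.1 hi).trans h₀.symm, fun j hj =>
      h₀ ▸ lt_of_le_of_ne (le_maxAffine x j) (mt mem_activeSet.2 hj)⟩
  · rintro ⟨hJ, hJc⟩
    have hmax : maxAffine v β x = v i₀ x + β i₀ := by
      refine le_antisymm ?_ (le_maxAffine x i₀)
      rw [maxAffine, Finset.sup'_apply]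
      refine Finset.sup'_le _ _ fun j _ => ?_
      by_cases hj : j ∈ J
      exacts [(hJ j hj).le, (hJc j hj).le]
    ext j
    rw [mem_activeSet, hmax]
    by_cases hj : j ∈ J
    · simp [hj, hJ j hj]
    · simp [hj, (hJc j hj).ne]

end MaxAffine

lemma eq_sup'_div_of_forall_le_iff {ι : Type*} [Fintype ι] {r : ℝ} {b d : ι → ℝ}
    (h : ∀ t, r ≤ t ↔ ∀ k, t * b k ≤ d k) :
    ∃ _ : Nonempty {k // b k < 0},
      r = Finset.univ.sup' Finset.univ_nonempty fun k : {k // b k < 0} => d k / b k := by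
  have hb : ∀ k, b k ≤ 0 := by
    intro k
    by_contra! hk
    have h₁ := (h (max r (d k / b k + 1))).1 (le_max_left _ _) k
    have h₂ : d k / b k < max r (d k / b k + 1) := (lt_add_one _).trans_le (le_max_right _ _)
    rw [div_lt_iff₀ hk] at h₂
    linarith
  have h' : ∀ t, r ≤ t ↔ ∀ k : {k // b k < 0}, d k / b k ≤ t := by
    refine fun t => (h t).trans ⟨fun ht k => (div_le_iff_of_neg k.2).2 (ht k), fun ht k => ?_⟩
    rcases (hb k).lt_or_eq with hk | hk
    · exact (div_le_iff_of_neg hk).1 (ht ⟨k, hk⟩)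
    · simpa [hk] using (h r).1 le_rfl k
  have hne : Nonempty {k // b k < 0} := by
    by_contra! hempty
    have := (h' (r - 1)).2 fun k => (IsEmpty.false k).elim
    linarith
  refine ⟨hne, le_antisymm ((h' _).2 fun k =>
    Finset.le_sup' (fun k : {k // b k < 0} => d k / b k) (Finset.mem_univ k)) ?_⟩
  exact Finset.sup'_le _ _ fun k _ => (h' r).1 le_rfl k

section Representation

variable {X : Type*} [AddCommGroup X] [Module ℝ X] [TopologicalSpace X]

lemma IsGPCF.exists_forall_le_iff {ψ : X → EReal} (hψ : IsGPCF X ψ) :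
    ∃ (p : ℕ) (u : Fin p → X →L[ℝ] ℝ) (b c : Fin p → ℝ), ∀ (x : X) (r : ℝ), ψ x = r →
      ∀ t : ℝ, r ≤ t ↔ ∀ k, t * b k ≤ c k - u k x := by
  obtain ⟨L, p, a, c, -, hE⟩ := hψ
  refine ⟨p, fun k => (a k).comp (ContinuousLinearMap.inl ℝ X ℝ), fun k => a k (0, 1), c, ?_⟩
  have ha : ∀ k x t, a k (x, t) = a k (x, 0) + t * a k (0, 1) := fun k x t => by
    rw [← smul_eq_mul, ← map_smul, ← map_add]; simp
  have hmem : ∀ (x : X) (t : ℝ), ψ x ≤ t ↔ (x, t) ∈ L ∧ ∀ k, a k (x, t) ≤ c k := fun x t => by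
    simpa [epigraph] using Set.ext_iff.1 hE (x, t)
  intro x r hr t
  have hline : (x, t) ∈ L := by
    have h₀ := ((hmem x r).1 hr.le).1
    have h₁ := ((hmem x (r + 1)).1 (by rw [hr]; exact_mod_cast (lt_add_one r).le)).1
    convert AffineMap.lineMap_mem (t - r) h₀ h₁ using 1
    ext <;> simp [AffineMap.lineMap_apply]
  rw [← EReal.coe_le_coe_iff, ← hr, hmem]
  simp only [hline, true_and, ContinuousLinearMap.comp_apply, ContinuousLinearMap.inl_apply]
  exact forall_congr' fun k => by rw [ha k x t]; constructor <;> intro <;> linarith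

lemma IsGPCF.exists_eq_maxAffine {ψ : X → EReal} (hψ : IsGPCF X ψ) (hp : ProperFn ψ) :
    ∃ (ι : Type) (_ : Fintype ι) (_ : Nonempty ι) (v : ι → X →L[ℝ] ℝ) (β : ι → ℝ),
      ∀ x ∈ domFn ψ, ψ x = maxAffine v β x := by
  obtain ⟨p, u, b, c, hψ⟩ := hψ.exists_forall_le_iff
  have hreal : ∀ x ∈ domFn ψ, ∃ r : ℝ, ψ x = r := fun x hx => ⟨(ψ x).toReal,
    (EReal.coe_toReal hx (hp.2 x)).symm⟩
  obtain ⟨x₀, hx₀⟩ := hp.1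
  obtain ⟨r₀, hr₀⟩ := hreal x₀ hx₀
  obtain ⟨hne, -⟩ := eq_sup'_div_of_forall_le_iff (hψ x₀ r₀ hr₀)
  refine ⟨{k // b k < 0}, inferInstance, hne, fun k => -(b k)⁻¹ • u k, fun k => c k / b k,
    fun x hx => ?_⟩
  obtain ⟨r, hr⟩ := hreal x hx
  obtain ⟨_, hsup⟩ := eq_sup'_div_of_forall_le_iff (hψ x r hr)
  rw [hr, hsup, maxAffine, Finset.sup'_apply]
  congr 2
  funext k
  have hk : b k ≠ 0 := k.2.ne
  simp only [smul_apply, smul_eq_mul]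
  field_simp
  ring

end Representation

lemma IsSemiClosedGPCSIn.convex {X : Type*} [AddCommGroup X] [Module ℝ X] [TopologicalSpace X]
    {C S : Set X} (hS : IsSemiClosedGPCSIn C S) : Convex ℝ S := by
  obtain ⟨P, Q, hP, -, hQ, -, -, rfl⟩ := hS
  exact hP.convex.inter hQ

lemma isMinOn_iff_le_of_isMinOn {α β : Type*} [Preorder β] {f : α → β} {s : Set α} {x z : α}
    (hz : IsMinOn f s z) (hzs : z ∈ s) : IsMinOn f s x ↔ f x ≤ f z :=
  ⟨fun h => h hzs, fun h => isMinOn_iff.2 fun y hy => h.trans (isMinOn_iff.1 hz y hy)⟩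

section DCProgram

variable {X : Type*} [AddCommGroup X] [Module ℝ X] [TopologicalSpace X]
  {ι : Type*} [Fintype ι] [Nonempty ι] {v : ι → X →L[ℝ] ℝ} {β : ι → ℝ} {C : Set X} {G : X → ℝ}

lemma isLocalMinOn_sub_maxAffine_iff [IsTopologicalAddGroup X] [ContinuousSMul ℝ X]
    (hG : ConvexOn ℝ C G) {x : X} (hx : x ∈ C) :
    IsLocalMinOn (fun y => G y - maxAffine v β y) C x ↔
      ∀ i ∈ activeSet v β x, IsMinOn (fun y => G y - (v i y + β i)) C x := by
  constructor
  · intro hmin i hi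
    refine IsMinOn.of_isLocalMinOn_of_convexOn hx ?_
      (hG.sub (((v i).toLinearMap.concaveOn hG.1).add_const (β i)))
    filter_upwards [hmin] with y hy
    have := le_maxAffine (v := v) (β := β) y i
    rw [mem_activeSet.1 hi]
    linarith
  · intro hmin
    filter_upwards [nhdsWithin_le_nhds (eventually_activeSet_subset (v := v) (β := β) x),
      self_mem_nhdsWithin] with y hy hyC
    obtain ⟨j, hj⟩ := activeSet_nonempty (v := v) (β := β) y
    have := isMinOn_iff.1 (hmin j (hy hj)) y hyC
    rw [mem_activeSet.1 hj, mem_activeSet.1 (hy hj)] at this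
    exact this

variable (v β C G) in
def dcPiece (J : Finset ι) : Set X :=
  {x | x ∈ C ∧ activeSet v β x = J ∧ ∀ i ∈ J, IsMinOn (fun y => G y - (v i y + β i)) C x}

lemma setOf_isLocalMinOn_sub_maxAffine_eq_iUnion [IsTopologicalAddGroup X] [ContinuousSMul ℝ X]
    (hG : ConvexOn ℝ C G) :
    {x | x ∈ C ∧ IsLocalMinOn (fun y => G y - maxAffine v β y) C x} = ⋃ J, dcPiece v β C G J := by
  ext x
  simp only [Set.mem_ofPred_eq, Set.mem_iUnion, dcPiece, exists_and_left, exists_eq_left']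
  exact and_congr_right fun hx => isLocalMinOn_sub_maxAffine_iff hG hx

lemma subsingleton_image_dcPiece (J : Finset ι) :
    ((fun y => G y - maxAffine v β y) '' dcPiece v β C G J).Subsingleton := by
  rintro _ ⟨x, ⟨hxC, hxJ, hx⟩, rfl⟩ _ ⟨y, ⟨hyC, hyJ, hy⟩, rfl⟩
  obtain ⟨i, hi⟩ : J.Nonempty := hxJ ▸ activeSet_nonempty x
  have hxy := isMinOn_iff.1 (hx i hi) y hyC
  have hyx := isMinOn_iff.1 (hy i hi) x hxC
  have hix : i ∈ activeSet v β x := hxJ ▸ hi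
  have hiy : i ∈ activeSet v β y := hyJ ▸ hi
  change G x - maxAffine v β x = G y - maxAffine v β y
  rw [← mem_activeSet.1 hix, ← mem_activeSet.1 hiy]
  linarith

lemma isSemiClosedGPCSIn_dcPiece [ContinuousAdd X] {g : X → EReal} (hg : IsGPCF X g)
    (hgG : ∀ x ∈ C, g x = G x) (hC : IsGPCS X C) (J : Finset ι) :
    IsSemiClosedGPCSIn C (dcPiece v β C G J) := by
  classical
  rcases (dcPiece v β C G J).eq_empty_or_nonempty with hJ | ⟨z, hzC, hzJ, hz⟩
  · exact ⟨∅, C, isGPCS_empty, Set.empty_subset C, hC.convex, subset_rfl,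
      ⟨Set.univ, isOpen_univ, (Set.inter_univ C).symm⟩, by rw [hJ, Set.empty_inter]⟩
  obtain ⟨i₀, hi₀⟩ : J.Nonempty := hzJ ▸ activeSet_nonempty z
  set m : ι → ℝ := fun i => G z - (v i z + β i)
  have hmin_iff : ∀ x ∈ C, ∀ i ∈ J, IsMinOn (fun y => G y - (v i y + β i)) C x ↔
      g x ≤ ((v i x + (β i + m i) : ℝ) : EReal) := by
    intro x hx i hi
    rw [isMinOn_iff_le_of_isMinOn (hz i hi) hzC, hgG x hx, EReal.coe_le_coe_iff]
    constructor <;> intro <;> linarith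
  have hV : IsOpen (⋂ j ∈ Jᶜ, {x | (v j - v i₀) x < β i₀ - β j}) :=
    isOpen_biInter_finset fun j _ => isOpen_lt (v j - v i₀).continuous continuous_const
  refine ⟨C ∩ ⋂ i ∈ J, ({x | g x ≤ ((v i x + (β i + m i) : ℝ) : EReal)} ∩
      {x | (v i - v i₀) x = β i₀ - β i}), C ∩ ⋂ j ∈ Jᶜ, {x | (v j - v i₀) x < β i₀ - β j},
    ?_, Set.inter_subset_left, ?_, Set.inter_subset_left, ⟨_, hV, rfl⟩, ?_⟩
  · exact hC.inter (IsGPCS.biInter fun i _ =>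
      (hg.isGPCS_setOf_le_affine (v i) _).inter (isGPCS_setOf_eq _ _))
  · exact hC.convex.inter
      (convex_iInter₂ fun j _ => convex_halfSpace_lt (v j - v i₀).isLinear _)
  ext x
  by_cases hx : x ∈ C
  · simp only [dcPiece, activeSet_eq_iff hi₀, Set.mem_inter_iff, Set.mem_iInter,
      Set.mem_ofPred_eq, Finset.mem_compl, sub_apply, hx, true_and]
    constructor
    · rintro ⟨⟨hJ, hJc⟩, hmin⟩
      exact ⟨fun i hi => ⟨(hmin_iff x hx i hi).1 (hmin i hi), by linarith [hJ i hi]⟩,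
        fun j hj => by linarith [hJc j hj]⟩
    · rintro ⟨hJ, hJc⟩
      exact ⟨⟨fun i hi => by linarith [(hJ i hi).2], fun j hj => by linarith [hJc j hj]⟩,
        fun i hi => (hmin_iff x hx i hi).2 (hJ i hi).1⟩
  · simp [dcPiece, hx]

end DCProgram

lemma exists_fin_biUnion_eq_iUnion {α ι : Type*} [Finite ι] (p : Set α → Prop) {T : ι → Set α}
    (hT : ∀ j, p (T j)) (s : Set ι) :
    ∃ (n : ℕ) (A : Fin n → Set α), (∀ i, p (A i)) ∧ ⋃ j ∈ s, T j = ⋃ i, A i := by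
  obtain ⟨n, e, rfl⟩ := s.toFinite.fin_embedding
  exact ⟨n, T ∘ e, fun i => hT (e i), Set.biUnion_range⟩

section Topology

variable {α ι : Type*} [TopologicalSpace α]

lemma connectedComponentIn_iUnion_eq_biUnion {T : ι → Set α} (hT : ∀ j, IsPreconnected (T j))
    (x : α) : connectedComponentIn (⋃ j, T j) x =
      ⋃ j ∈ {j | (T j ∩ connectedComponentIn (⋃ j, T j) x).Nonempty}, T j := by
  refine Set.Subset.antisymm (fun y hy => ?_) (Set.iUnion₂_subset fun j ⟨y, hyT, hyK⟩ => ?_)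
  · obtain ⟨j, hj⟩ := Set.mem_iUnion.1 (connectedComponentIn_subset _ _ hy)
    exact Set.mem_biUnion ⟨y, hj, hy⟩ hj
  · rw [connectedComponentIn_eq hyK]
    exact (hT j).subset_connectedComponentIn hyT (Set.subset_iUnion T j)

lemma IsPreconnected.eq_of_subset_iUnion [Finite ι] {K : Set α} {T : ι → Set α} {f : α → ℝ}
    (hK : IsPreconnected K) (hf : ContinuousOn f K) (hKT : K ⊆ ⋃ j, T j)
    (hT : ∀ j, (f '' T j).Subsingleton) {x y : α} (hx : x ∈ K) (hy : y ∈ K) : f x = f y := by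
  have hfin : (f '' K).Finite := (Set.finite_iUnion fun j => (hT j).finite).subset <| by
    rw [← Set.image_iUnion]; exact Set.image_mono hKT
  exact hfin.countable.isTotallyDisconnected _ subset_rfl (hK.image f hf)
    (Set.mem_image_of_mem f hx) (Set.mem_image_of_mem f hy)

end Topology

section DCObjective

variable {X : Type*} {g h : X → EReal}

lemma dcObj_eq_coe_sub {x : X} {a b : ℝ} (hg : g x = a) (hh : h x = b) :
    dcObj g h x = ((a - b : ℝ) : EReal) := by
  simp [dcObj, hg, hh, EReal.coe_sub]

lemma setOf_isLocalSolution_eq [TopologicalSpace X] {C : Set X} {F : X → ℝ}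
    (hF : ∀ x ∈ C, dcObj g h x = F x) :
    {x | IsLocalSolution g h C x} = {x | x ∈ C ∧ IsLocalMinOn F C x} := by
  ext x
  refine and_congr_right fun hx => ?_
  rw [IsLocalMinOn, IsMinFilter, eventually_nhdsWithin_iff, Filter.eventually_iff_exists_mem]
  refine exists_congr fun U => and_congr_right fun _ => ⟨fun H y hyU hyC => ?_, fun H y hy => ?_⟩
  · simpa [hF x hx, hF y hyC] using H y ⟨hyC, hyU⟩
  · simpa [hF x hx, hF y hy.1] using H y hy.2 hy.1

end DCObjective

theorem stmt13_general {X : Type*} [AddCommGroup X] [Module ℝ X] [TopologicalSpace X]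
    [IsTopologicalAddGroup X] [ContinuousSMul ℝ X]
    (g h : X → EReal)
    (hg2 : ProperFn g) (hg3 : IsGPCF X g)
    (hh2 : ProperFn h) (hh3 : IsGPCF X h)
    (C : Set X) (hC2 : IsGPCS X C)
    (hCg : C ⊆ domFn g) (hCh : C ⊆ interior (domFn h)) :
    ∀ x₀ ∈ {x : X | IsLocalSolution g h C x},
      (∃ (n : ℕ) (A : Fin n → Set X), (∀ i, IsSemiClosedGPCSIn C (A i)) ∧
        connectedComponentIn {x : X | IsLocalSolution g h C x} x₀ = ⋃ i, A i) ∧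
      (∀ y ∈ connectedComponentIn {x : X | IsLocalSolution g h C x} x₀,
        dcObj g h y = dcObj g h x₀) := by
  obtain ⟨ι, _, _, vg, βg, hgG⟩ := hg3.exists_eq_maxAffine hg2
  obtain ⟨κ, _, _, vh, βh, hhH⟩ := hh3.exists_eq_maxAffine hh2
  set G := maxAffine vg βg
  set F : X → ℝ := fun y => G y - maxAffine vh βh y
  have hgC : ∀ x ∈ C, g x = G x := fun x hx => hgG x (hCg hx)
  have hF : ∀ x ∈ C, dcObj g h x = F x := fun x hx =>
    dcObj_eq_coe_sub (hgC x hx) (hhH x (interior_subset (hCh hx)))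
  have hpieces : ∀ J, IsSemiClosedGPCSIn C (dcPiece vh βh C G J) :=
    isSemiClosedGPCSIn_dcPiece hg3 hgC hC2
  have hS : {x | IsLocalSolution g h C x} = ⋃ J, dcPiece vh βh C G J := by
    rw [setOf_isLocalSolution_eq hF, setOf_isLocalMinOn_sub_maxAffine_eq_iUnion
      (convexOn_maxAffine.subset (Set.subset_univ C) hC2.convex)]
  intro x₀ hx₀
  have hKC : connectedComponentIn {x | IsLocalSolution g h C x} x₀ ⊆ C :=
    fun y hy => (connectedComponentIn_subset _ _ hy).1
  rw [hS] at hx₀ hKC ⊢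
  refine ⟨?_, fun y hy => ?_⟩
  · obtain ⟨n, A, hA, hAeq⟩ := exists_fin_biUnion_eq_iUnion _ hpieces
      {J | (dcPiece vh βh C G J ∩ connectedComponentIn (⋃ J, dcPiece vh βh C G J) x₀).Nonempty}
    exact ⟨n, A, hA, (connectedComponentIn_iUnion_eq_biUnion
      (fun J => (hpieces J).convex.isPreconnected) x₀).trans hAeq⟩
  have hx₀K := mem_connectedComponentIn hx₀
  rw [hF y (hKC hy), hF x₀ (hKC hx₀K)]
  exact congrArg _ (isPreconnected_connectedComponentIn.eq_of_subset_iUnion (f := F)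
    (continuous_maxAffine.sub continuous_maxAffine).continuousOn (connectedComponentIn_subset _ _)
    subsingleton_image_dcPiece hy hx₀K)

/-- for a gpdc program, every connected component of the local solution set
is a union of finitely many semi-closed generalized polyhedral convex sets, and the
objective `f = g - h` is constant on each connected component. -/
theorem stmt13 {X : Type*} [AddCommGroup X] [Module ℝ X] [TopologicalSpace X]
    [IsTopologicalAddGroup X] [ContinuousSMul ℝ X] [LocallyConvexSpace ℝ X] [T2Space X]
    (g h : X → EReal)
    (hg2 : ProperFn g) (hg3 : IsGPCF X g)
    (hh2 : ProperFn h) (hh3 : IsGPCF X h)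
    (C : Set X) (hC1 : C.Nonempty) (hC2 : IsGPCS X C)
    (hCg : C ⊆ domFn g) (hCh : C ⊆ interior (domFn h)) :
    ∀ x₀ ∈ {x : X | IsLocalSolution g h C x},
      (∃ (n : ℕ) (A : Fin n → Set X), (∀ i, IsSemiClosedGPCSIn C (A i)) ∧
        connectedComponentIn {x : X | IsLocalSolution g h C x} x₀ = ⋃ i, A i) ∧
      (∀ y ∈ connectedComponentIn {x : X | IsLocalSolution g h C x} x₀,
        dcObj g h y = dcObj g h x₀) :=
  stmt13_general g h hg2 hg3 hh2 hh3 C hC2 hCg hCh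
end

section
/- Let g, h: X → ℝ ∪ {+∞} be lower semicontinuous, proper, convex functions and C ⊆ X a nonempty closed convex set with (dom g) ∩ C ≠ ∅. Then the optimal value of the primal problem: minimize g(x) − h(x) subject to x ∈ C, equals the optimal value of the dual problem: minimize h*(x*) − (g + δ_C)*(x*) over x* ∈ X*. -/
open Pointwise Topology

/-!
Fenchel–Moreau: a proper lower semicontinuous convex `h` satisfies `h = h**`. A point strictly
below the epigraph is separated from it by a closed hyperplane; a non-vertical one is an affine
minorant of `h` above the point, and a vertical one is tilted into such a minorant by adding a
large multiple of it to one fixed affine minorant. With `f = g + δ_C` and `h = h**`, both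
optimal values become `⨅ x, ⨅ x*, f x + h* x* - ⟨x*, x⟩`.
-/

namespace EReal

lemma coe_sub_coe_sub (m : ℝ) (x : EReal) : (m : EReal) - ((m : EReal) - x) = x := by
  induction x with
  | bot => simp
  | coe y => norm_cast; ring
  | top => simp

lemma coe_sub_iSup {ι : Sort*} (m : ℝ) (a : ι → EReal) :
    (m : EReal) - ⨆ i, a i = ⨅ i, ((m : EReal) - a i) := by
  refine le_antisymm (le_iInf fun i => sub_le_sub le_rfl (le_iSup a i)) ?_
  calc ⨅ i, ((m : EReal) - a i) = (m : EReal) - ((m : EReal) - ⨅ i, ((m : EReal) - a i)) :=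
        (coe_sub_coe_sub m _).symm
    _ ≤ (m : EReal) - ⨆ i, a i := by
        refine sub_le_sub le_rfl (iSup_le fun i => ?_)
        calc a i = (m : EReal) - ((m : EReal) - a i) := (coe_sub_coe_sub m _).symm
          _ ≤ _ := sub_le_sub le_rfl (iInf_le _ i)

lemma coe_sub_le_comm {a : ℝ} {e c : EReal} (h : (a : EReal) - e ≤ c) : (a : EReal) - c ≤ e :=
  calc (a : EReal) - c ≤ (a : EReal) - ((a : EReal) - e) := sub_le_sub le_rfl h
    _ = e := coe_sub_coe_sub a e

lemma coe_sub_le_coe_iff_forall {a c : ℝ} {e : EReal} :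
    (a : EReal) - e ≤ c ↔ ∀ t : ℝ, e ≤ t → a - t ≤ c := by
  induction e with
  | bot =>
    simp only [coe_sub_bot, top_le_iff, coe_ne_top, bot_le, true_implies, false_iff, not_forall,
      not_le]
    exact ⟨a - c - 1, by linarith⟩
  | coe e =>
    norm_cast
    exact ⟨fun h t ht => by linarith, fun h => h e le_rfl⟩
  | top => simp

lemma coe_sub_coe_sub_eq_add_sub {a b : ℝ} {e : EReal} (he : e ≠ ⊥) :
    (a : EReal) - ((b : EReal) - e) = (a : EReal) + e - b := by
  induction e with
  | bot => exact absurd rfl he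
  | coe e => norm_cast; ring
  | top => simp

end EReal

section DCObjective

variable {Y : Type*} {A B : Y → EReal} {y : Y}

lemma dcObj_of_eq_top (hA : A y = ⊤) : dcObj A B y = ⊤ := by
  unfold dcObj
  split_ifs with hB
  · rfl
  · exact hA ▸ EReal.top_sub fun hBy => hB ⟨hA, hBy⟩

lemma dcObj_eq_iInf {ι : Type*} (hA : A y ≠ ⊥) {r : ι → ℝ} {e : ι → EReal} (he : ∀ i, e i ≠ ⊥)
    (hB : B y = ⨆ i, ((r i : EReal) - e i)) :
    dcObj A B y = ⨅ i, (A y + e i - r i) := by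
  induction hAy : A y with
  | bot => exact absurd hAy hA
  | top =>
    simp only [dcObj_of_eq_top hAy, EReal.top_add_of_ne_bot (he _), EReal.top_sub_coe, iInf_top]
  | coe a =>
    rw [dcObj, if_neg (by simp [hAy]), hAy, hB, EReal.coe_sub_iSup]
    exact iInf_congr fun i => EReal.coe_sub_coe_sub_eq_add_sub (he i)

lemma dcObj_add_indFn {g : Y → EReal} (hg : ∀ x, g x ≠ ⊥) (C : Set Y) (x : Y) :
    dcObj (fun x => g x + indFn C x) B x = ⨅ (_ : x ∈ C), dcObj g B x := by
  by_cases hx : x ∈ C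
  · simp only [dcObj, indFn, hx, if_true, add_zero, iInf_pos]
  · rw [iInf_neg hx]
    exact dcObj_of_eq_top (by simp only [indFn, hx, if_false, EReal.add_top_of_ne_bot (hg x)])

lemma add_indFn_ne_bot {g : Y → EReal} (hg : ∀ x, g x ≠ ⊥) (C : Set Y) (x : Y) :
    g x + indFn C x ≠ ⊥ := by
  rw [ne_eq, EReal.add_eq_bot_iff, not_or]
  exact ⟨hg x, by unfold indFn; split_ifs <;> simp⟩

end DCObjective

lemma LowerSemicontinuous.isClosed_epigraph' {X : Type*} [TopologicalSpace X] {h : X → EReal}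
    (hlsc : LowerSemicontinuous h) : IsClosed (epigraph h) :=
  hlsc.isClosed_epigraph.preimage
    (continuous_fst.prodMk (continuous_coe_real_ereal.comp continuous_snd))

section Conjugate

variable {X : Type*} [AddCommGroup X] [Module ℝ X] [TopologicalSpace X] {h : X → EReal}

lemma coe_sub_le_conjFn (h : X → EReal) (p : X →L[ℝ] ℝ) (x : X) :
    ((p x : ℝ) : EReal) - h x ≤ conjFn h p :=
  le_iSup (fun y => ((p y : ℝ) : EReal) - h y) x

lemma conjFn_ne_bot {x : X} (hx : h x ≠ ⊤) (p : X →L[ℝ] ℝ) : conjFn h p ≠ ⊥ :=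
  ne_bot_of_le_ne_bot (by induction hx' : h x <;> simp_all [← EReal.coe_sub])
    (coe_sub_le_conjFn h p x)

lemma conjFn_le_coe_iff {q : X →L[ℝ] ℝ} {c : ℝ} :
    conjFn h q ≤ c ↔ ∀ x (t : ℝ), h x ≤ t → q x - t ≤ c := by
  simp only [conjFn, iSup_le_iff, EReal.coe_sub_le_coe_iff_forall]

lemma iSup_coe_sub_conjFn_le (h : X → EReal) (x : X) :
    ⨆ p : X →L[ℝ] ℝ, (((p x : ℝ) : EReal) - conjFn h p) ≤ h x :=
  iSup_le fun p => EReal.coe_sub_le_comm (coe_sub_le_conjFn h p x)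

variable {φ : X →L[ℝ] ℝ} {s u : ℝ}

lemma slope_nonneg_of_separation (hsep : ∀ x (t : ℝ), h x ≤ t → u < φ x + s * t) {x₁ : X}
    (hx₁ : h x₁ ≠ ⊤) : 0 ≤ s := by
  obtain ⟨t₁, ht₁, -⟩ := EReal.exists_between_coe_real (lt_top_iff_ne_top.2 hx₁)
  by_contra! hs
  -- the affine function `t ↦ φ x₁ + s * t` reaches `u` at some `t ≥ t₁`
  set t := t₁ + (φ x₁ + s * t₁ - u) / -s
  have hgap := hsep x₁ t₁ ht₁.le
  have htt₁ : t₁ ≤ t := le_add_of_nonneg_right (div_nonneg (by linarith) (by linarith))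
  have hu := hsep x₁ t (ht₁.le.trans (EReal.coe_le_coe_iff.2 htt₁))
  have : s * t = s * t₁ - (φ x₁ + s * t₁ - u) := by
    simp only [t, mul_add, mul_div_assoc', mul_neg, div_neg, mul_div_cancel_left₀ _ hs.ne]
    ring
  linarith

lemma conjFn_le_of_separation (hs : 0 < s) (hsep : ∀ x (t : ℝ), h x ≤ t → u < φ x + s * t) :
    conjFn h (-s⁻¹ • φ) ≤ ((-(u / s) : ℝ) : EReal) := by
  refine conjFn_le_coe_iff.2 fun x t ht => ?_
  have hdiv : u / s < φ x / s + t := by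
    calc u / s < (φ x + s * t) / s := div_lt_div_of_pos_right (hsep x t ht) hs
      _ = φ x / s + t := by field_simp
  simp only [smul_apply, smul_eq_mul, neg_mul, ← div_eq_inv_mul]
  linarith

lemma exists_conjFn_le_of_vertical_separation {q₁ : X →L[ℝ] ℝ} {c₁ : ℝ}
    (hq₁ : conjFn h q₁ ≤ c₁) (hsep : ∀ x (t : ℝ), h x ≤ t → u < φ x) {x₀ : X}
    (hx₀ : φ x₀ < u) (r : ℝ) :
    ∃ (q : X →L[ℝ] ℝ) (c : ℝ), conjFn h q ≤ c ∧ r < q x₀ - c := by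
  set k := max 0 ((r - (q₁ x₀ - c₁) + 1) / (u - φ x₀))
  have hk : 0 ≤ k := le_max_left _ _
  have hkr : r - (q₁ x₀ - c₁) + 1 ≤ k * (u - φ x₀) :=
    (div_le_iff₀ (by linarith)).1 (le_max_right _ _)
  refine ⟨q₁ - k • φ, c₁ - k * u, conjFn_le_coe_iff.2 fun x t ht => ?_, ?_⟩
  · have hq := conjFn_le_coe_iff.1 hq₁ x t ht
    have hφ := mul_le_mul_of_nonneg_left (hsep x t ht).le hk
    simp only [sub_apply, smul_apply, smul_eq_mul]
    linarith
  · simp only [sub_apply, smul_apply, smul_eq_mul]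
    linarith

end Conjugate

section FenchelMoreau

variable {X : Type*} [AddCommGroup X] [Module ℝ X] [TopologicalSpace X]
  [IsTopologicalAddGroup X] [ContinuousSMul ℝ X] [LocallyConvexSpace ℝ X] {h : X → EReal}

lemma exists_separation_of_lt (hlsc : LowerSemicontinuous h) (hconv : ConvexFn h) {x₀ : X}
    {r : ℝ} (hr : (r : EReal) < h x₀) :
    ∃ (φ : X →L[ℝ] ℝ) (s u : ℝ),
      φ x₀ + s * r < u ∧ ∀ x (t : ℝ), h x ≤ t → u < φ x + s * t := by
  obtain ⟨F, u, hlt, hgt⟩ := geometric_hahn_banach_point_closed hconv hlsc.isClosed_epigraph'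
    (fun hmem => (not_le.2 hr) hmem : ((x₀, r) : X × ℝ) ∉ epigraph h)
  have hF : ∀ x (t : ℝ), F (x, t) = F.comp (.inl ℝ X ℝ) x + F (0, 1) * t := fun x t => by
    have : ((x, t) : X × ℝ) = (x, 0) + t • (0, 1) := by simp
    rw [this, map_add, map_smul, smul_eq_mul, mul_comm]; rfl
  exact ⟨_, _, u, hF x₀ r ▸ hlt, fun x t ht => hF x t ▸ hgt (x, t) ht⟩

variable (hlsc : LowerSemicontinuous h) (hproper : ProperFn h) (hconv : ConvexFn h)
include hlsc hproper hconv

lemma exists_conjFn_le_coe : ∃ (q : X →L[ℝ] ℝ) (c : ℝ), conjFn h q ≤ c := by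
  obtain ⟨⟨x₁, hx₁⟩, hbot⟩ := hproper
  obtain ⟨t₁, ht₁⟩ : ∃ t : ℝ, h x₁ = t := ⟨_, (EReal.coe_toReal hx₁ (hbot x₁)).symm⟩
  obtain ⟨φ, s, u, hlt, hsep⟩ :=
    exists_separation_of_lt hlsc hconv (by rw [ht₁]; exact EReal.coe_lt_coe_iff.2 (sub_one_lt t₁))
  have hs : 0 < s := by
    refine (slope_nonneg_of_separation hsep hx₁).lt_of_ne' fun hs => ?_
    have := hsep x₁ t₁ ht₁.le
    simp only [hs, zero_mul, add_zero] at hlt this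
    linarith
  exact ⟨_, _, conjFn_le_of_separation hs hsep⟩

lemma exists_conjFn_le_of_lt {x₀ : X} {r : ℝ} (hr : (r : EReal) < h x₀) :
    ∃ (q : X →L[ℝ] ℝ) (c : ℝ), conjFn h q ≤ c ∧ r < q x₀ - c := by
  obtain ⟨φ, s, u, hlt, hsep⟩ := exists_separation_of_lt hlsc hconv hr
  obtain ⟨x₁, hx₁⟩ := hproper.1
  rcases (slope_nonneg_of_separation hsep hx₁).lt_or_eq with hs | rfl
  · refine ⟨_, _, conjFn_le_of_separation hs hsep, ?_⟩
    have : r < (u - φ x₀) / s := (lt_div_iff₀ hs).2 (by linarith)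
    simp only [smul_apply, smul_eq_mul]
    field_simp at this ⊢
    linarith
  · obtain ⟨q₁, c₁, hq₁⟩ := exists_conjFn_le_coe hlsc hproper hconv
    simp only [zero_mul, add_zero] at hlt hsep
    exact exists_conjFn_le_of_vertical_separation hq₁ hsep hlt r

theorem iSup_coe_sub_conjFn_eq (x : X) :
    ⨆ p : X →L[ℝ] ℝ, (((p x : ℝ) : EReal) - conjFn h p) = h x := by
  refine (iSup_coe_sub_conjFn_le h x).antisymm (EReal.ge_of_forall_gt_iff_ge.1 fun r hr => ?_)
  obtain ⟨q, c, hqc, hrq⟩ := exists_conjFn_le_of_lt hlsc hproper hconv hr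
  calc (r : EReal) ≤ ((q x - c : ℝ) : EReal) := EReal.coe_le_coe_iff.2 hrq.le
    _ = ((q x : ℝ) : EReal) - c := EReal.coe_sub _ _
    _ ≤ ((q x : ℝ) : EReal) - conjFn h q := EReal.sub_le_sub le_rfl hqc
    _ ≤ ⨆ p : X →L[ℝ] ℝ, (((p x : ℝ) : EReal) - conjFn h p) :=
      le_iSup (fun p : X →L[ℝ] ℝ => ((p x : ℝ) : EReal) - conjFn h p) q

theorem iInf_dcObj_eq_iInf_dcObj_conjFn {f : X → EReal} (hf : ∀ x, f x ≠ ⊥) :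
    ⨅ x, dcObj f h x = ⨅ p, dcObj (conjFn h) (conjFn f) p := by
  obtain ⟨x₁, hx₁⟩ := hproper.1
  have hconj := conjFn_ne_bot hx₁
  calc ⨅ x, dcObj f h x = ⨅ x, ⨅ p : X →L[ℝ] ℝ, (f x + conjFn h p - p x) :=
        iInf_congr fun x =>
          dcObj_eq_iInf (hf x) hconj (iSup_coe_sub_conjFn_eq hlsc hproper hconv x).symm
    _ = ⨅ p : X →L[ℝ] ℝ, ⨅ x, (conjFn h p + f x - p x) := by
        rw [iInf_comm]; simp only [add_comm (f _)]
    _ = ⨅ p, dcObj (conjFn h) (conjFn f) p :=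
        iInf_congr fun p => (dcObj_eq_iInf (hconj p) hf rfl).symm

end FenchelMoreau

theorem stmt14_general {X : Type*} [AddCommGroup X] [Module ℝ X] [TopologicalSpace X]
    [IsTopologicalAddGroup X] [ContinuousSMul ℝ X] [LocallyConvexSpace ℝ X]
    (g h : X → EReal)
    (hg2 : ProperFn g)
    (hh1 : LowerSemicontinuous h) (hh2 : ProperFn h) (hh3 : ConvexFn h)
    (C : Set X) :
    (⨅ x ∈ C, dcObj g h x) =
      ⨅ p : X →L[ℝ] ℝ, dcObj (conjFn h) (conjFn (fun x => g x + indFn C x)) p := by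
  rw [← iInf_dcObj_eq_iInf_dcObj_conjFn hh1 hh2 hh3 (add_indFn_ne_bot hg2.2 C)]
  exact iInf_congr fun x => (dcObj_add_indFn hg2.2 C x).symm

/-- Toland–Singer duality: the optimal value of the primal DC program
`min_{x ∈ C} (g(x) - h(x))` equals the optimal value of the dual DC program
`min_{x* ∈ X*} (h*(x*) - (g + δ_C)*(x*))`. -/
theorem stmt14 {X : Type*} [AddCommGroup X] [Module ℝ X] [TopologicalSpace X]
    [IsTopologicalAddGroup X] [ContinuousSMul ℝ X] [LocallyConvexSpace ℝ X] [T2Space X]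
    (g h : X → EReal)
    (hg1 : LowerSemicontinuous g) (hg2 : ProperFn g) (hg3 : ConvexFn g)
    (hh1 : LowerSemicontinuous h) (hh2 : ProperFn h) (hh3 : ConvexFn h)
    (C : Set X) (hC1 : C.Nonempty) (hC2 : IsClosed C) (hC3 : Convex ℝ C)
    (hdom : (domFn g ∩ C).Nonempty) :
    (⨅ x ∈ C, dcObj g h x) =
      ⨅ p : X →L[ℝ] ℝ, dcObj (conjFn h) (conjFn (fun x => g x + indFn C x)) p :=
  stmt14_general g h hg2 hh1 hh2 hh3 C
end

section
/- Let g: X → ℝ ∪ {+∞} be a lower semicontinuous, proper, convex function, h: X → ℝ ∪ {+∞} a proper generalized polyhedral convex function, and C ⊆ X a nonempty closed convex set with (dom g) ∩ C ≠ ∅; set f = g − h. Let H be a selection of the subdifferential mapping ∂h on C ∩ dom ∂h whose range is a finite set, and let G_C be a selection of the subdifferential mapping ∂(g + δ_C)* on dom ∂(g + δ_C)*. Suppose sequences {x^k} and {ξ^k} are well-defined for all k ∈ ℕ by: x⁰ ∈ (dom g) ∩ C, ξ^k = H(x^k), x^{k+1} = G_C(ξ^k). Then there exist k̄ ∈ ℕ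 and p ≥ 1 such that: (a) x^{k+p} = x^k and ξ^{k+p} = ξ^k for every k ≥ k̄; (b) f(x^k) = f(x^{k̄}) for every k ≥ k̄. -/
open Pointwise Topology

/-!
Write `φ = g + δ_C`. The `x`-step of the iteration makes `ξ k` a subgradient of `φ` at `x (k+1)`:
for a proper closed convex `φ`, `y ∈ ∂φ*(ξ)` forces `φ y ≤ φ** y ≤ ⟨ξ, y⟩ - φ* ξ`, where
`φ ≤ φ**` is the Fenchel–Moreau inequality, obtained by separating points from the epigraph.
Combined with `ξ k ∈ ∂h(x k)` this gives the descent `f (x (k+1)) ≤ f (x k)`.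
Since `ξ (k+1) = H (G (ξ k))` and `ξ` takes finitely many values, `ξ` is eventually periodic, hence
so is `x`, and an eventually periodic nonincreasing sequence is eventually constant.
-/

open Set

lemma EReal.exists_eq_coe {a : EReal} (ha : a ≠ ⊤) (ha' : a ≠ ⊥) : ∃ r : ℝ, a = r :=
  ⟨a.toReal, (EReal.coe_toReal ha ha').symm⟩

lemma LowerSemicontinuous.isClosed_epigraph_real {X : Type*} [TopologicalSpace X]
    {g : X → EReal} (hg : LowerSemicontinuous g) : IsClosed (epigraph g) :=
  hg.isClosed_epigraph.preimage (continuous_id.prodMap continuous_coe_real_ereal)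

section Conjugate

variable {X : Type*} [AddCommGroup X] [Module ℝ X] [TopologicalSpace X] {φ : X → EReal}

lemma sub_le_conjFn (φ : X → EReal) (p : X →L[ℝ] ℝ) (z : X) :
    ((p z : ℝ) : EReal) - φ z ≤ conjFn φ p :=
  le_iSup (fun x => ((p x : ℝ) : EReal) - φ x) z

lemma conjFn_le_of_forall_epigraph (hbot : ∀ z, φ z ≠ ⊥) {p : X →L[ℝ] ℝ} {u : ℝ}
    (h : ∀ z (s : ℝ), φ z ≤ s → p z - s ≤ u) : conjFn φ p ≤ u := by
  refine iSup_le fun z => ?_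
  by_cases hz : φ z = ⊤
  · rw [hz, EReal.sub_top]
    exact bot_le
  · obtain ⟨s, hs⟩ := EReal.exists_eq_coe hz (hbot z)
    rw [hs, ← EReal.coe_sub, EReal.coe_le_coe_iff]
    exact h z s hs.le

variable [IsTopologicalAddGroup X] [ContinuousSMul ℝ X] [LocallyConvexSpace ℝ X]

lemma exists_affine_minorant_or_vertical (hconv : ConvexFn φ) (hcl : IsClosed (epigraph φ))
    (hne : (epigraph φ).Nonempty) {y : X} {t : ℝ} (hyt : (t : EReal) < φ y) :
    (∃ (p : X →L[ℝ] ℝ) (u : ℝ), (∀ z (s : ℝ), φ z ≤ s → p z - s ≤ u) ∧ t < p y - u) ∨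
      ∃ (q : X →L[ℝ] ℝ) (u : ℝ), (∀ z (s : ℝ), φ z ≤ s → q z < u) ∧ u < q y := by
  obtain ⟨F, u, hF, hFy⟩ :=
    geometric_hahn_banach_closed_point hconv hcl (show (y, t) ∉ epigraph φ from not_le.2 hyt)
  set q : X →L[ℝ] ℝ := F.comp (ContinuousLinearMap.inl ℝ X ℝ)
  set c : ℝ := F (0, 1)
  have hFq : ∀ z (s : ℝ), F (z, s) = q z + s * c := fun z s => by
    rw [show (z, s) = (z, (0 : ℝ)) + s • ((0 : X), (1 : ℝ)) by simp, map_add, map_smul,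
      smul_eq_mul, mul_comm]
    rfl
  have hepi : ∀ z (s : ℝ), φ z ≤ s → q z + s * c < u := fun z s hzs => hFq z s ▸ hF (z, s) hzs
  have hy : u < q y + t * c := hFq y t ▸ hFy
  have hc : c ≤ 0 := by
    -- the epigraph is unbounded above, so `c > 0` would make `F` unbounded on it
    obtain ⟨⟨x₀, r₀⟩, hx₀⟩ := hne
    by_contra! hc
    have hs : (u - q x₀) / c ≤ max r₀ ((u - q x₀) / c) := le_max_right _ _
    have := hepi x₀ _ (hx₀.trans (EReal.coe_le_coe_iff.2 (le_max_left r₀ ((u - q x₀) / c))))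
    rw [div_le_iff₀ hc] at hs
    linarith
  rcases hc.lt_or_eq with hc | hc
  · left
    set d : ℝ := (-c)⁻¹
    have hd : d * c = -1 := by simp only [d, inv_mul_eq_div, div_neg, div_self hc.ne]
    have hd0 : 0 < d := inv_pos.2 (neg_pos.2 hc)
    have hscale : ∀ z (s : ℝ), (d • q) z - s = d * (q z + s * c) := fun z s => by
      simp only [smul_apply, smul_eq_mul]
      linear_combination (-s) * hd
    refine ⟨d • q, d * u, fun z s hzs => ?_, ?_⟩
    · rw [hscale]
      exact mul_le_mul_of_nonneg_left (hepi z s hzs).le hd0.le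
    · have := hscale y t ▸ mul_lt_mul_of_pos_left hy hd0
      linarith
  · right
    refine ⟨q, u, fun z s hzs => ?_, ?_⟩
    · simpa [hc] using hepi z s hzs
    · simpa [hc] using hy

/-- The Fenchel–Moreau inequality `φ ≤ φ**`. -/
theorem le_iSup_sub_conjFn (hφ : ProperFn φ) (hconv : ConvexFn φ) (hcl : IsClosed (epigraph φ))
    (y : X) : φ y ≤ ⨆ p : X →L[ℝ] ℝ, ((p y : ℝ) : EReal) - conjFn φ p := by
  obtain ⟨x₀, hx₀⟩ := hφ.1
  obtain ⟨r₀, hr₀⟩ := EReal.exists_eq_coe hx₀ (hφ.2 x₀)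
  have hne : (epigraph φ).Nonempty := ⟨(x₀, r₀), hr₀.le⟩
  have of_minorant : ∀ (p : X →L[ℝ] ℝ) (u t : ℝ), (∀ z (s : ℝ), φ z ≤ s → p z - s ≤ u) →
      t < p y - u → (t : EReal) < ⨆ p : X →L[ℝ] ℝ, ((p y : ℝ) : EReal) - conjFn φ p :=
    fun p u t hpu ht => calc
      (t : EReal) < ((p y - u : ℝ) : EReal) := EReal.coe_lt_coe_iff.2 ht
      _ = ((p y : ℝ) : EReal) - (u : EReal) := EReal.coe_sub _ _
      _ ≤ ((p y : ℝ) : EReal) - conjFn φ p :=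
        EReal.sub_le_sub le_rfl (conjFn_le_of_forall_epigraph hφ.2 hpu)
      _ ≤ _ := le_iSup (fun p : X →L[ℝ] ℝ => ((p y : ℝ) : EReal) - conjFn φ p) p
  obtain ⟨pb, ub, hpb⟩ : ∃ (p : X →L[ℝ] ℝ) (u : ℝ), ∀ z (s : ℝ), φ z ≤ s → p z - s ≤ u := by
    have hbelow : ((r₀ - 1 : ℝ) : EReal) < φ x₀ := by
      rw [hr₀]
      exact EReal.coe_lt_coe_iff.2 (sub_one_lt r₀)
    rcases exists_affine_minorant_or_vertical hconv hcl hne hbelow with ⟨p, u, hpu, -⟩ | ⟨q, u, hqu, hu⟩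
    · exact ⟨p, u, hpu⟩
    · exact absurd (hqu x₀ r₀ hr₀.le) hu.not_gt
  by_contra! hlt
  obtain ⟨t, hSt, hty⟩ := EReal.exists_between_coe_real hlt
  refine hSt.not_gt ?_
  rcases exists_affine_minorant_or_vertical hconv hcl hne hty with ⟨p, u, hpu, ht⟩ | ⟨q, u, hqu, hu⟩
  · exact of_minorant p u t hpu ht
  · -- tilt the affine minorant `pb - ub` by a large multiple of the vertical separator
    obtain ⟨n, hn⟩ := exists_nat_gt ((t - (pb y - ub)) / (q y - u))
    rw [div_lt_iff₀ (sub_pos.2 hu)] at hn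
    refine of_minorant (pb + (n : ℝ) • q) (ub + n * u) t (fun z s hzs => ?_) ?_
    · have := mul_le_mul_of_nonneg_left (hqu z s hzs).le (Nat.cast_nonneg (α := ℝ) n)
      simp only [add_apply, smul_apply, smul_eq_mul]
      linarith [hpb z s hzs]
    · simp only [add_apply, smul_apply, smul_eq_mul]
      linarith

theorem mem_subdiffAt_of_mem_subdiffStarAt_conjFn (hφ : ProperFn φ) (hconv : ConvexFn φ)
    (hcl : IsClosed (epigraph φ)) {p₀ : X →L[ℝ] ℝ} {y : X}
    (hy : y ∈ SubdiffStarAt (conjFn φ) p₀) : φ y ≠ ⊤ ∧ p₀ ∈ SubdiffAt φ y := by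
  have hconj_ne_bot : ∀ p, conjFn φ p ≠ ⊥ := fun p hp => by
    obtain ⟨x₀, hx₀⟩ := hφ.1
    obtain ⟨r₀, hr₀⟩ := EReal.exists_eq_coe hx₀ (hφ.2 x₀)
    have := sub_le_conjFn φ p x₀
    rw [hr₀, hp, le_bot_iff, ← EReal.coe_sub] at this
    exact EReal.coe_ne_bot _ this
  have hconj_ne_top : conjFn φ p₀ ≠ ⊤ := fun htop => by
    have := hy p₀
    rw [htop, EReal.sub_top, sub_self, le_bot_iff] at this
    exact EReal.coe_ne_bot _ this
  obtain ⟨c, hc⟩ := EReal.exists_eq_coe hconj_ne_top (hconj_ne_bot p₀)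
  have hbiconj : ⨆ p : X →L[ℝ] ℝ, ((p y : ℝ) : EReal) - conjFn φ p ≤ ((p₀ y - c : ℝ) : EReal) := by
    refine iSup_le fun p => ?_
    by_cases hp : conjFn φ p = ⊤
    · rw [hp, EReal.sub_top]
      exact bot_le
    · obtain ⟨d, hd⟩ := EReal.exists_eq_coe hp (hconj_ne_bot p)
      have := hy p
      rw [hc, hd, ← EReal.coe_sub, EReal.coe_le_coe_iff] at this
      rw [hd, ← EReal.coe_sub, EReal.coe_le_coe_iff]
      linarith
  have hyle := (le_iSup_sub_conjFn hφ hconv hcl y).trans hbiconj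
  have hy_ne_top : φ y ≠ ⊤ := ne_top_of_le_ne_top (EReal.coe_ne_top _) hyle
  obtain ⟨b, hb⟩ := EReal.exists_eq_coe hy_ne_top (hφ.2 y)
  refine ⟨hy_ne_top, fun z => ?_⟩
  by_cases hz : φ z = ⊤
  · rw [hz, hb, EReal.top_sub_coe]
    exact le_top
  · obtain ⟨s, hs⟩ := EReal.exists_eq_coe hz (hφ.2 z)
    have := sub_le_conjFn φ p₀ z
    rw [hs, hc, ← EReal.coe_sub, EReal.coe_le_coe_iff] at this
    rw [hb, EReal.coe_le_coe_iff] at hyle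
    rw [hs, hb, ← EReal.coe_sub, EReal.coe_le_coe_iff]
    linarith

end Conjugate

section DC

variable {X : Type*} [AddCommGroup X] [Module ℝ X] [TopologicalSpace X]

lemma ne_top_of_mem_subdiffAt {h : X → EReal} (hh : ProperFn h) {a : X} {ξ : X →L[ℝ] ℝ}
    (hξ : ξ ∈ SubdiffAt h a) : h a ≠ ⊤ := fun htop => by
  obtain ⟨z, hz⟩ := hh.1
  have := hξ z
  rw [htop, EReal.sub_top, le_bot_iff] at this
  exact EReal.coe_ne_bot _ this

lemma dcObj_le_of_mem_subdiffAt {g h : X → EReal} (hg : ∀ x, g x ≠ ⊥) (hh : ProperFn h)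
    {a b : X} {ξ : X →L[ℝ] ℝ} (hgb : g b ≠ ⊤) (hξh : ξ ∈ SubdiffAt h a)
    (hξg : ((ξ a - ξ b : ℝ) : EReal) ≤ g a - g b) : dcObj g h b ≤ dcObj g h a := by
  have hha := ne_top_of_mem_subdiffAt hh hξh
  by_cases hga : g a = ⊤
  · simp [dcObj, hga, hha, EReal.top_sub hha]
  by_cases hhb : h b = ⊤
  · simp [dcObj, hgb, hhb, EReal.sub_top]
  obtain ⟨A, hA⟩ := EReal.exists_eq_coe hga (hg a)
  obtain ⟨B, hB⟩ := EReal.exists_eq_coe hgb (hg b)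
  obtain ⟨A', hA'⟩ := EReal.exists_eq_coe hha (hh.2 a)
  obtain ⟨B', hB'⟩ := EReal.exists_eq_coe hhb (hh.2 b)
  have hh_ineq := hξh b
  rw [hA', hB', ← EReal.coe_sub, EReal.coe_le_coe_iff] at hh_ineq
  rw [hA, hB, ← EReal.coe_sub, EReal.coe_le_coe_iff] at hξg
  simp only [dcObj, hA, hB, hA', hB', EReal.coe_ne_top, and_false, if_false, ← EReal.coe_sub,
    EReal.coe_le_coe_iff]
  linarith

end DC

lemma epigraph_add_indFn {X : Type*} {g : X → EReal} (hg : ∀ x, g x ≠ ⊥) (C : Set X) :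
    epigraph (fun z => g z + indFn C z) = epigraph g ∩ C ×ˢ univ := by
  ext ⟨z, s⟩
  by_cases hz : z ∈ C
  · simp [epigraph, indFn, hz]
  · simp [epigraph, indFn, hz, EReal.add_top_of_ne_bot (hg z)]

lemma properFn_add_indFn {X : Type*} {g : X → EReal} (hg : ProperFn g) {C : Set X}
    (hdom : (domFn g ∩ C).Nonempty) : ProperFn (fun z => g z + indFn C z) := by
  obtain ⟨z, hz, hzC⟩ := hdom
  refine ⟨⟨z, by simpa [indFn, hzC, domFn] using hz⟩, fun x => ?_⟩
  by_cases hx : x ∈ C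
  · simpa [indFn, hx] using hg.2 x
  · simp [indFn, hx, EReal.add_top_of_ne_bot (hg.2 x)]

lemma exists_eventually_periodic_of_finite_range {α : Type*} {T : α → α} {u : ℕ → α}
    (hu : ∀ k, u (k + 1) = T (u k)) (hfin : (range u).Finite) :
    ∃ k₀ p : ℕ, 0 < p ∧ ∀ k ≥ k₀, u (k + p) = u k := by
  obtain ⟨i, j, hij, huij⟩ := hfin.exists_lt_map_eq_of_forall_mem (f := u) (mem_range_self)
  refine ⟨i, j - i, Nat.sub_pos_of_lt hij, fun k hk => ?_⟩
  induction k, hk using Nat.le_induction with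
  | base => rw [Nat.add_sub_cancel' hij.le, huij]
  | succ k _ ih => rw [Nat.add_right_comm, hu, ih, hu]

lemma eq_of_antitone_of_periodic {α : Type*} [PartialOrder α] {u : ℕ → α} {k₀ p : ℕ}
    (hp : 0 < p) (hanti : ∀ k ≥ k₀, u (k + 1) ≤ u k) (hper : ∀ k ≥ k₀, u (k + p) = u k) :
    ∀ k ≥ k₀, u k = u k₀ := by
  set v : ℕ → α := fun n => u (k₀ + n)
  have hv : Antitone v := antitone_nat_of_succ_le fun n => hanti (k₀ + n) (Nat.le_add_right _ _)
  have hvper : Function.Periodic v p := fun n => by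
    simp only [v, ← add_assoc]
    exact hper _ (Nat.le_add_right _ _)
  intro k hk
  obtain ⟨n, rfl⟩ := Nat.exists_eq_add_of_le hk
  refine le_antisymm (hv (Nat.zero_le n)) ?_
  calc u k₀ = v (n * p) := (hvper.nat_mul_eq n).symm
    _ ≤ v n := hv (Nat.le_mul_of_pos_right n hp)

theorem stmt17_general {X : Type*} [AddCommGroup X] [Module ℝ X] [TopologicalSpace X]
    [IsTopologicalAddGroup X] [ContinuousSMul ℝ X] [LocallyConvexSpace ℝ X]
    (g h : X → EReal)
    (hg1 : LowerSemicontinuous g) (hg2 : ProperFn g) (hg3 : ConvexFn g)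
    (hh2 : ProperFn h)
    (C : Set X) (hC2 : IsClosed C) (hC3 : Convex ℝ C)
    (hdom : (domFn g ∩ C).Nonempty)
    -- `H` is a selection of `∂h` on `C ∩ dom ∂h` with finite range
    (H : X → (X →L[ℝ] ℝ))
    (hHsel : ∀ z ∈ C, (SubdiffAt h z).Nonempty → H z ∈ SubdiffAt h z)
    (hHfin : (H '' (C ∩ {z : X | (SubdiffAt h z).Nonempty})).Finite)
    -- `G` is a selection of `∂(g + δ_C)*` on `dom ∂(g + δ_C)*`
    (G : (X →L[ℝ] ℝ) → X)
    (hGsel : ∀ q : X →L[ℝ] ℝ,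
      (SubdiffStarAt (conjFn (fun z => g z + indFn C z)) q).Nonempty →
        G q ∈ SubdiffStarAt (conjFn (fun z => g z + indFn C z)) q)
    -- the DCA sequences, well-defined for all `k`
    (x : ℕ → X) (ξ : ℕ → (X →L[ℝ] ℝ))
    (hxC : ∀ k : ℕ, x k ∈ C)
    (hxdom : ∀ k : ℕ, (SubdiffAt h (x k)).Nonempty)
    (hξdef : ∀ k : ℕ, ξ k = H (x k))
    (hξdom : ∀ k : ℕ,
      (SubdiffStarAt (conjFn (fun z => g z + indFn C z)) (ξ k)).Nonempty)
    (hxsucc : ∀ k : ℕ, x (k + 1) = G (ξ k)) :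
    ∃ (k₀ p : ℕ), 1 ≤ p ∧
      (∀ k : ℕ, k₀ ≤ k → x (k + p) = x k ∧ ξ (k + p) = ξ k) ∧
      (∀ k : ℕ, k₀ ≤ k → dcObj g h (x k) = dcObj g h (x k₀)) := by
  have hφC : ∀ z ∈ C, g z + indFn C z = g z := fun z hz => by simp [indFn, hz]
  have hepi := epigraph_add_indFn hg2.2 C
  have hsub : ∀ k, g (x (k + 1)) ≠ ⊤ ∧
      ξ k ∈ SubdiffAt (fun z => g z + indFn C z) (x (k + 1)) := fun k => by
    have := mem_subdiffAt_of_mem_subdiffStarAt_conjFn (properFn_add_indFn hg2 hdom)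
      (by rw [ConvexFn, hepi]; exact hg3.inter (hC3.prod convex_univ))
      (by rw [hepi]; exact hg1.isClosed_epigraph_real.inter (hC2.prod isClosed_univ))
      (hxsucc k ▸ hGsel _ (hξdom k))
    rwa [hφC _ (hxC _)] at this
  have hdesc : ∀ k, dcObj g h (x (k + 2)) ≤ dcObj g h (x (k + 1)) := fun k => by
    refine dcObj_le_of_mem_subdiffAt hg2.2 hh2 (hsub (k + 1)).1
      (hξdef (k + 1) ▸ hHsel _ (hxC _) (hxdom _)) ?_
    simpa only [hφC _ (hxC _)] using (hsub (k + 1)).2 (x (k + 1))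
  obtain ⟨k₀, p, hp, hξper⟩ := exists_eventually_periodic_of_finite_range (T := H ∘ G)
    (fun k => by rw [hξdef, hxsucc, hξdef, Function.comp_apply])
    (hHfin.subset (range_subset_iff.2 fun k => ⟨x k, ⟨hxC k, hxdom k⟩, (hξdef k).symm⟩))
  have hxper : ∀ k ≥ k₀ + 1, x (k + p) = x k := fun k hk => by
    obtain ⟨m, rfl⟩ : ∃ m, k = m + 1 := ⟨k - 1, by omega⟩
    rw [add_right_comm, hxsucc, hxsucc, hξper m (by omega)]
  refine ⟨k₀ + 1, p, hp, fun k hk => ⟨hxper k hk, hξper k (by omega)⟩, ?_⟩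
  refine eq_of_antitone_of_periodic hp (fun k hk => ?_) (fun k hk => by rw [hxper k hk])
  obtain ⟨m, rfl⟩ : ∃ m, k = m + 1 := ⟨k - 1, by omega⟩
  exact hdesc m

/-- cyclic behavior of DCA sequences generated by selections, when `h` is
generalized polyhedral convex (so that a finite-range selection `H` of `∂h` exists). -/
theorem stmt17 {X : Type*} [AddCommGroup X] [Module ℝ X] [TopologicalSpace X]
    [IsTopologicalAddGroup X] [ContinuousSMul ℝ X] [LocallyConvexSpace ℝ X] [T2Space X]
    (g h : X → EReal)
    (hg1 : LowerSemicontinuous g) (hg2 : ProperFn g) (hg3 : ConvexFn g)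
    (hh2 : ProperFn h) (hh3 : IsGPCF X h)
    (C : Set X) (hC1 : C.Nonempty) (hC2 : IsClosed C) (hC3 : Convex ℝ C)
    (hdom : (domFn g ∩ C).Nonempty)
    -- `H` is a selection of `∂h` on `C ∩ dom ∂h` with finite range
    (H : X → (X →L[ℝ] ℝ))
    (hHsel : ∀ z ∈ C, (SubdiffAt h z).Nonempty → H z ∈ SubdiffAt h z)
    (hHdep : ∀ z w : X, SubdiffAt h z = SubdiffAt h w → H z = H w)
    (hHfin : (H '' (C ∩ {z : X | (SubdiffAt h z).Nonempty})).Finite)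
    -- `G` is a selection of `∂(g + δ_C)*` on `dom ∂(g + δ_C)*`
    (G : (X →L[ℝ] ℝ) → X)
    (hGsel : ∀ q : X →L[ℝ] ℝ,
      (SubdiffStarAt (conjFn (fun z => g z + indFn C z)) q).Nonempty →
        G q ∈ SubdiffStarAt (conjFn (fun z => g z + indFn C z)) q)
    (hGdep : ∀ q r : X →L[ℝ] ℝ,
      SubdiffStarAt (conjFn (fun z => g z + indFn C z)) q =
          SubdiffStarAt (conjFn (fun z => g z + indFn C z)) r →
        G q = G r)
    -- the DCA sequences, well-defined for all `k`
    (x : ℕ → X) (ξ : ℕ → (X →L[ℝ] ℝ))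
    (hx0 : x 0 ∈ domFn g ∩ C)
    (hxC : ∀ k : ℕ, x k ∈ C)
    (hxdom : ∀ k : ℕ, (SubdiffAt h (x k)).Nonempty)
    (hξdef : ∀ k : ℕ, ξ k = H (x k))
    (hξdom : ∀ k : ℕ,
      (SubdiffStarAt (conjFn (fun z => g z + indFn C z)) (ξ k)).Nonempty)
    (hxsucc : ∀ k : ℕ, x (k + 1) = G (ξ k)) :
    ∃ (k₀ p : ℕ), 1 ≤ p ∧
      (∀ k : ℕ, k₀ ≤ k → x (k + p) = x k ∧ ξ (k + p) = ξ k) ∧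
      (∀ k : ℕ, k₀ ≤ k → dcObj g h (x k) = dcObj g h (x k₀)) :=
  stmt17_general g h hg1 hg2 hg3 hh2 C hC2 hC3 hdom H hHsel hHfin G hGsel x ξ hxC hxdom hξdef hξdom
    hxsucc
end
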